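/- Let ρ_A = x⁽¹⁾x⁽¹⁾* and ρ_B = x⁽²⁾x⁽²⁾* be positive definite density matrices (trace 1). Define Γ_x(y) = −E(x) − (1/2)·Tr[(y*y + yy*)·log(xx*)] for x with Tr(xx*)=1. If y = Σ_l c_l · y_l⁽¹⁾ ⊗ y_l⁽²⁾ with real c_l, Σ_l c_l² = 1, and Tr(y_l⁽¹⁾ y_{l'}⁽¹⁾*) = Tr(y_l⁽²⁾ y_{l'}⁽²⁾*) = δ_{ll'}, then Γ_{x⁽¹⁾⊗x⁽²⁾}(y) = Σ_l c_l²·(Γ_{x⁽¹⁾}(y_l⁽¹⁾) + Γ_{x⁽²⁾}(y_l⁽²⁾)). -/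

import Mathlib

open Matrix Kronecker
open scoped ComplexOrder

variable {n : Type*} [Fintype n] [DecidableEq n]

/-- Matrix logarithm of a Hermitian matrix via its spectral decomposition. -/
noncomputable def matLog (A : Matrix n n ℂ) : Matrix n n ℂ :=
  if hA : A.IsHermitian then
    (hA.eigenvectorUnitary : Matrix n n ℂ) *
      Matrix.diagonal (fun i => (Real.log (hA.eigenvalues i) : ℂ)) *
        (hA.eigenvectorUnitary : Matrix n n ℂ)ᴴ
  else 0

/-- Von Neumann entropy `S(A) = −Tr(A log A)` computed via the eigenvalues. -/
noncomputable def vnEntropy (A : Matrix n n ℂ) : ℝ :=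
  if hA : A.IsHermitian then
    -∑ i, hA.eigenvalues i * Real.log (hA.eigenvalues i)
  else 0

/-- Entanglement entropy `E(x) = −Tr(xx* log xx*)` of the bipartite state with matrix `x`. -/
noncomputable def entE (x : Matrix n n ℂ) : ℝ := vnEntropy (x * xᴴ)

/-- `Γ_x(y) = −E(x) − (1/2)·Tr[(y*y + yy*)·log(xx*)]`. -/
noncomputable def Gamma (x y : Matrix n n ℂ) : ℝ :=
  -entE x - (1 / 2) * (Matrix.trace ((yᴴ * y + y * yᴴ) * matLog (x * xᴴ))).re

/-!
The matrix logarithm `matLog` agrees with the continuous functional calculus `cfc Real.log`,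
which does not depend on the chosen diagonalisation. Diagonalising `A ⊗ B` by `U ⊗ V`, with
eigenvalues `μᵢ νⱼ`, therefore gives `log (A ⊗ B) = log A ⊗ 1 + 1 ⊗ log B`. Since both traces
are `1`, this makes the entropy additive. In `Tr[(y*y + yy*)(log A ⊗ 1 + 1 ⊗ log B)]` the
Hilbert–Schmidt orthonormality of the second family collapses the double sum of the `log A`
terms to its diagonal, that of the first family does the same for the `log B` terms, and
`Σ c_l² = 1` lets the entropy term be distributed over `l`.
-/

section FunctionalCalculus

open Polynomial Unitary

variable {𝕜 : Type*} [RCLike 𝕜]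

lemma aeval_diagonal {R α : Type*} [CommSemiring R] [CommSemiring α] [Algebra R α]
    (d : n → α) (q : R[X]) : aeval (diagonal d) q = diagonal fun i => aeval (d i) q := by
  rw [← diagonalAlgHom_apply (R := R), aeval_algHom_apply, aeval_pi_apply]
  rfl

lemma isHermitian_conjStarAlgAut_diagonal (U : unitary (Matrix n n 𝕜)) (d : n → ℝ) :
    (conjStarAlgAut 𝕜 _ U (diagonal (RCLike.ofReal ∘ d))).IsHermitian :=
  IsSelfAdjoint.map
    (isHermitian_diagonal_iff.mpr fun i => RCLike.conj_ofReal (d i)).isSelfAdjoint _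

/- Replacing `f` by a polynomial interpolating it on the entries of `d` reduces the claim to
polynomials, which commute with the conjugation. -/
lemma cfc_conjStarAlgAut_diagonal (f : ℝ → ℝ) (U : unitary (Matrix n n 𝕜)) (d : n → ℝ) :
    cfc f (conjStarAlgAut 𝕜 _ U (diagonal (RCLike.ofReal ∘ d))) =
      conjStarAlgAut 𝕜 _ U (diagonal (RCLike.ofReal ∘ f ∘ d)) := by
  set φ := conjStarAlgAut ℝ (Matrix n n 𝕜) U
  set D : Matrix n n 𝕜 := diagonal (RCLike.ofReal ∘ d)
  obtain ⟨q, hq⟩ : ∃ q : ℝ[X], ∀ i, q.eval (d i) = f (d i) :=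
    ⟨Lagrange.interpolate (Finset.univ.image d) id f, fun i => by
      simpa using Lagrange.eval_interpolate_at_node f (Set.injOn_id _)
        (Finset.mem_image_of_mem d (Finset.mem_univ i))⟩
  have hspec : spectrum ℝ (φ D) = Set.range d := by
    rw [conjStarAlgAut_apply, spectrum_star_right_conjugate, ← spectrum.preimage_algebraMap 𝕜,
      spectrum_diagonal]
    ext
    simp
  change cfc f (φ D) = φ _
  calc cfc f (φ D) = cfc q.eval (φ D) :=
        cfc_congr (by rw [hspec]; rintro _ ⟨i, rfl⟩; exact (hq i).symm)
    _ = φ (aeval D q) := by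
        rw [cfc_polynomial q (φ D) (isHermitian_conjStarAlgAut_diagonal U d).isSelfAdjoint,
          aeval_algHom_apply]
    _ = φ (diagonal (RCLike.ofReal ∘ f ∘ d)) := by
        rw [aeval_diagonal]
        congr 2
        funext i
        simp [← hq i, ← RCLike.algebraMap_eq_ofReal, aeval_algebraMap_apply]

lemma matLog_eq_conjStarAlgAut {A : Matrix n n ℂ} (hA : A.IsHermitian) :
    matLog A = conjStarAlgAut ℂ _ hA.eigenvectorUnitary
      (diagonal (RCLike.ofReal ∘ Real.log ∘ hA.eigenvalues)) := by
  rw [matLog, dif_pos hA]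
  rfl

lemma matLog_eq_cfc {A : Matrix n n ℂ} (hA : A.IsHermitian) : matLog A = cfc Real.log A := by
  rw [hA.cfc_eq, matLog_eq_conjStarAlgAut hA]
  rfl

lemma matLog_conjStarAlgAut_diagonal (U : unitary (Matrix n n ℂ)) (d : n → ℝ) :
    matLog (conjStarAlgAut ℂ _ U (diagonal (RCLike.ofReal ∘ d))) =
      conjStarAlgAut ℂ _ U (diagonal (RCLike.ofReal ∘ Real.log ∘ d)) := by
  rw [matLog_eq_cfc (isHermitian_conjStarAlgAut_diagonal U d), cfc_conjStarAlgAut_diagonal]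

lemma trace_mul_matLog {A : Matrix n n ℂ} (hA : A.IsHermitian) :
    trace (A * matLog A) = ∑ i, ((hA.eigenvalues i * Real.log (hA.eigenvalues i) : ℝ) : ℂ) := by
  rw [matLog_eq_conjStarAlgAut hA]
  nth_rewrite 1 [hA.spectral_theorem]
  rw [← map_mul, conjStarAlgAut_apply, trace_mul_cycle, coe_star_mul_self, one_mul,
    diagonal_mul_diagonal, trace_diagonal]
  simp

lemma vnEntropy_eq_neg_re_trace {A : Matrix n n ℂ} (hA : A.IsHermitian) :
    vnEntropy A = -(trace (A * matLog A)).re := by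
  rw [vnEntropy, dif_pos hA, trace_mul_matLog hA, Complex.re_sum]
  simp

end FunctionalCalculus

section Kronecker

open Unitary

variable {m₁ m₂ : Type*} [Fintype m₁] [DecidableEq m₁] [Fintype m₂] [DecidableEq m₂]

lemma conjStarAlgAut_kronecker {R : Type*} [CommRing R] [StarRing R]
    (U : unitary (Matrix m₁ m₁ R)) (V : unitary (Matrix m₂ m₂ R))
    (X : Matrix m₁ m₁ R) (Y : Matrix m₂ m₂ R) :
    conjStarAlgAut R _
        ⟨(U : Matrix m₁ m₁ R) ⊗ₖ (V : Matrix m₂ m₂ R), kronecker_mem_unitary U.2 V.2⟩ (X ⊗ₖ Y) =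
      conjStarAlgAut R _ U X ⊗ₖ conjStarAlgAut R _ V Y := by
  simp [mul_kronecker_mul, star_eq_conjTranspose, conjTranspose_kronecker]

lemma matLog_kronecker {A : Matrix m₁ m₁ ℂ} {B : Matrix m₂ m₂ ℂ} (hA : A.PosDef) (hB : B.PosDef) :
    matLog (A ⊗ₖ B) = matLog A ⊗ₖ 1 + 1 ⊗ₖ matLog B := by
  set U := hA.1.eigenvectorUnitary
  set V := hB.1.eigenvectorUnitary
  set μ := hA.1.eigenvalues
  set ν := hB.1.eigenvalues
  have hAB : A ⊗ₖ B = conjStarAlgAut ℂ _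
      ⟨(U : Matrix m₁ m₁ ℂ) ⊗ₖ (V : Matrix m₂ m₂ ℂ), kronecker_mem_unitary U.2 V.2⟩
      (diagonal (RCLike.ofReal ∘ fun p : m₁ × m₂ => μ p.1 * ν p.2)) := by
    conv_lhs => rw [hA.1.spectral_theorem, hB.1.spectral_theorem]
    rw [← conjStarAlgAut_kronecker, diagonal_kronecker_diagonal]
    congr 2
    funext p
    exact (RCLike.ofReal_mul _ _).symm
  have hμ : ∀ i, 0 < μ i := hA.eigenvalues_pos
  have hν : ∀ j, 0 < ν j := hB.eigenvalues_pos
  have hlog : diagonal (RCLike.ofReal ∘ Real.log ∘ fun p : m₁ × m₂ => μ p.1 * ν p.2) =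
      diagonal (RCLike.ofReal ∘ Real.log ∘ μ) ⊗ₖ (1 : Matrix m₂ m₂ ℂ) +
        (1 : Matrix m₁ m₁ ℂ) ⊗ₖ diagonal (RCLike.ofReal ∘ Real.log ∘ ν) := by
    simp only [← diagonal_one, diagonal_kronecker_diagonal, diagonal_add]
    congr 1
    funext p
    simp [Real.log_mul (hμ p.1).ne' (hν p.2).ne']
  rw [hAB, matLog_conjStarAlgAut_diagonal, hlog, map_add, conjStarAlgAut_kronecker,
    conjStarAlgAut_kronecker, ← matLog_eq_conjStarAlgAut, ← matLog_eq_conjStarAlgAut, map_one,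
    map_one]

lemma vnEntropy_kronecker {A : Matrix m₁ m₁ ℂ} {B : Matrix m₂ m₂ ℂ} (hA : A.PosDef)
    (hB : B.PosDef) (htrA : trace A = 1) (htrB : trace B = 1) :
    vnEntropy (A ⊗ₖ B) = vnEntropy A + vnEntropy B := by
  rw [vnEntropy_eq_neg_re_trace (hA.kronecker hB).1, vnEntropy_eq_neg_re_trace hA.1,
    vnEntropy_eq_neg_re_trace hB.1, matLog_kronecker hA hB, mul_add, trace_add,
    ← mul_kronecker_mul, ← mul_kronecker_mul, trace_kronecker, trace_kronecker, mul_one, mul_one,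
    htrA, htrB]
  simp
  ring

end Kronecker

section TraceExpansion

variable {ι m₁ m₂ : Type*} [Fintype ι] [Fintype m₁] [Fintype m₂]

omit [Fintype m₁] [Fintype m₂] in
lemma conjTranspose_sum_smul_kronecker (c : ι → ℂ) (u : ι → Matrix m₁ m₁ ℂ)
    (w : ι → Matrix m₂ m₂ ℂ) :
    (∑ l, c l • (u l ⊗ₖ w l))ᴴ = ∑ l, star (c l) • ((u l)ᴴ ⊗ₖ (w l)ᴴ) := by
  simp [conjTranspose_sum, conjTranspose_kronecker]

lemma trace_conjTranspose_mul_self_mul_kronecker (c : ι → ℂ) (u : ι → Matrix m₁ m₁ ℂ)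
    (w : ι → Matrix m₂ m₂ ℂ) (P : Matrix m₁ m₁ ℂ) (Q : Matrix m₂ m₂ ℂ) :
    trace ((∑ l, c l • (u l ⊗ₖ w l))ᴴ * (∑ l, c l • (u l ⊗ₖ w l)) * (P ⊗ₖ Q)) =
      ∑ l, ∑ l', star (c l) * c l' *
        (trace ((u l)ᴴ * u l' * P) * trace ((w l)ᴴ * w l' * Q)) := by
  simp only [conjTranspose_sum_smul_kronecker, Finset.sum_mul, Finset.mul_sum, trace_sum,
    Matrix.smul_mul, Matrix.mul_smul, trace_smul, ← mul_kronecker_mul, trace_kronecker, smul_eq_mul]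
  rw [Finset.sum_comm]
  refine Finset.sum_congr rfl fun l _ => Finset.sum_congr rfl fun l' _ => ?_
  ring

lemma trace_mul_self_conjTranspose_mul_kronecker (c : ι → ℂ) (u : ι → Matrix m₁ m₁ ℂ)
    (w : ι → Matrix m₂ m₂ ℂ) (P : Matrix m₁ m₁ ℂ) (Q : Matrix m₂ m₂ ℂ) :
    trace ((∑ l, c l • (u l ⊗ₖ w l)) * (∑ l, c l • (u l ⊗ₖ w l))ᴴ * (P ⊗ₖ Q)) =
      ∑ l, ∑ l', c l * star (c l') *
        (trace (u l * (u l')ᴴ * P) * trace (w l * (w l')ᴴ * Q)) := by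
  nth_rewrite 1 [← conjTranspose_conjTranspose (∑ l, c l • (u l ⊗ₖ w l))]
  rw [conjTranspose_sum_smul_kronecker, trace_conjTranspose_mul_self_mul_kronecker]
  simp

variable [DecidableEq ι] [DecidableEq m₁] [DecidableEq m₂]

omit [Fintype ι] in
lemma trace_conjTranspose_mul_of_orthonormal {m : Type*} [Fintype m] {u : ι → Matrix m m ℂ}
    (hu : ∀ l l', trace (u l * (u l')ᴴ) = if l = l' then 1 else 0) (l l' : ι) :
    trace ((u l)ᴴ * u l') = if l = l' then 1 else 0 := by
  rw [trace_mul_comm, hu]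
  exact if_congr eq_comm rfl rfl

lemma trace_mul_kronecker_add_of_orthonormal (c : ι → ℂ) {u : ι → Matrix m₁ m₁ ℂ}
    {w : ι → Matrix m₂ m₂ ℂ} (hu : ∀ l l', trace (u l * (u l')ᴴ) = if l = l' then 1 else 0)
    (hw : ∀ l l', trace (w l * (w l')ᴴ) = if l = l' then 1 else 0)
    (P : Matrix m₁ m₁ ℂ) (Q : Matrix m₂ m₂ ℂ) :
    trace (((∑ l, c l • (u l ⊗ₖ w l))ᴴ * (∑ l, c l • (u l ⊗ₖ w l)) +
        (∑ l, c l • (u l ⊗ₖ w l)) * (∑ l, c l • (u l ⊗ₖ w l))ᴴ) * (P ⊗ₖ 1 + 1 ⊗ₖ Q)) =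
      ∑ l, star (c l) * c l * (trace (((u l)ᴴ * u l + u l * (u l)ᴴ) * P) +
        trace (((w l)ᴴ * w l + w l * (w l)ᴴ) * Q)) := by
  simp only [add_mul, mul_add, trace_add, trace_conjTranspose_mul_self_mul_kronecker,
    trace_mul_self_conjTranspose_mul_kronecker, mul_one, hu, hw,
    trace_conjTranspose_mul_of_orthonormal hu, trace_conjTranspose_mul_of_orthonormal hw]
  simp only [mul_ite, ite_mul, mul_one, mul_zero, zero_mul, Finset.sum_ite_eq, Finset.mem_univ,
    if_true, ← Finset.sum_add_distrib]
  exact Finset.sum_congr rfl fun l _ => by ring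

end TraceExpansion

/-- If `y = Σ_l c_l · y_l⁽¹⁾ ⊗ y_l⁽²⁾` with real `c_l`, `Σ c_l² = 1`, and the families
`{y_l⁽¹⁾}`, `{y_l⁽²⁾}` Hilbert–Schmidt orthonormal, then
`Γ_{x⁽¹⁾⊗x⁽²⁾}(y) = Σ_l c_l²·(Γ_{x⁽¹⁾}(y_l⁽¹⁾) + Γ_{x⁽²⁾}(y_l⁽²⁾))`. -/
theorem Gamma_additive {n₁ n₂ L : ℕ}
    (x₁ : Matrix (Fin n₁) (Fin n₁) ℂ) (x₂ : Matrix (Fin n₂) (Fin n₂) ℂ)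
    (hx₁ : (x₁ * x₁ᴴ).PosDef) (hx₂ : (x₂ * x₂ᴴ).PosDef)
    (htr₁ : Matrix.trace (x₁ * x₁ᴴ) = 1) (htr₂ : Matrix.trace (x₂ * x₂ᴴ) = 1)
    (c : Fin L → ℝ) (hc : ∑ l, (c l) ^ 2 = 1)
    (y₁ : Fin L → Matrix (Fin n₁) (Fin n₁) ℂ)
    (y₂ : Fin L → Matrix (Fin n₂) (Fin n₂) ℂ)
    (hy₁ : ∀ l l', Matrix.trace (y₁ l * (y₁ l')ᴴ) = if l = l' then 1 else 0)
    (hy₂ : ∀ l l', Matrix.trace (y₂ l * (y₂ l')ᴴ) = if l = l' then 1 else 0) :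
    Gamma (x₁ ⊗ₖ x₂) (∑ l, (c l : ℂ) • (y₁ l ⊗ₖ y₂ l)) =
      ∑ l, (c l) ^ 2 * (Gamma x₁ (y₁ l) + Gamma x₂ (y₂ l)) := by
  have hxx : (x₁ ⊗ₖ x₂) * (x₁ ⊗ₖ x₂)ᴴ = (x₁ * x₁ᴴ) ⊗ₖ (x₂ * x₂ᴴ) := by
    rw [conjTranspose_kronecker, mul_kronecker_mul]
  have hE : entE (x₁ ⊗ₖ x₂) = ∑ l, c l ^ 2 * (entE x₁ + entE x₂) := by
    rw [← Finset.sum_mul, hc, one_mul, entE, hxx, vnEntropy_kronecker hx₁ hx₂ htr₁ htr₂]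
    rfl
  have hc_sq : ∀ l, star (c l : ℂ) * c l = ((c l ^ 2 : ℝ) : ℂ) := fun l => by
    simp [sq]
  rw [Gamma, hE, hxx, matLog_kronecker hx₁ hx₂,
    trace_mul_kronecker_add_of_orthonormal _ hy₁ hy₂]
  simp only [hc_sq, Complex.re_sum, Complex.re_ofReal_mul, Complex.add_re, Gamma, Finset.mul_sum,
    ← Finset.sum_neg_distrib, ← Finset.sum_sub_distrib]
  exact Finset.sum_congr rfl fun l _ => by ring
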